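/- Let A be a ring and M a right A-module with generators indexed by a finite set G, presented via structure coefficients c_{ab} ∈ A satisfying the type-D structure equation d(c_{ac}) + Σ_{b∈G} c_{ab}c_{bc} = 0 for all a,c ∈ G (A a dg-algebra over 𝔽₂). If x, y ∈ G satisfy: c_{xy} is invertible with inverse c_{xy}^{-1} and d(c_{xy}) = 0, then the coefficients c'_{ac} = c_{ac} + c_{ay}c_{xy}^{-1}c_{xc} for a, c ∈ G\{x,y} also satisfy the type-D structure equation: d(c'_{ac}) + Σ_{b∈G\{x,y}} c'_{ab}c'_{bc} = 0. -/

import Mathlib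

/-!
Write `v = c_{xy}⁻¹` and `c'_{ac} = c_{ac} - c_{ay} v c_{xc}`; over `𝔽₂` the sign is irrelevant,
and with the minus sign the argument works over any ring. Extending the formula for `c'` to
all of `G`, the row `c'_{x·}` and the column `c'_{·y}` vanish identically, so the sum over
`G \ {x, y}` in the structure equation is a sum over all of `G`. Expanding it produces the
sums `∑_b c_{pb} c_{bq} = -d(c_{pq})`; the one with `(p, q) = (x, y)` vanishes because `c_{xy}`
is a cycle, and the others cancel `d(c')` computed by the Leibniz rule, using `d v = 0`.
-/

open Finset

section

variable {A : Type*} [Ring A]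

theorem map_one_eq_zero_of_leibniz (d : A →+ A)
    (hleib : ∀ a b : A, d (a * b) = d a * b + a * d b) : d 1 = 0 := by
  simpa using hleib 1 1

theorem map_units_inv_eq_zero_of_leibniz (d : A →+ A)
    (hleib : ∀ a b : A, d (a * b) = d a * b + a * d b) (u : Aˣ) (hdu : d u = 0) :
    d ↑u⁻¹ = 0 := by
  have h : d ↑u⁻¹ * u = 0 := by
    simpa [hdu, map_one_eq_zero_of_leibniz d hleib] using (hleib ↑u⁻¹ u).symm
  simpa [mul_assoc] using congrArg (· * (↑u⁻¹ : A)) h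

theorem neg_eq_self_of_zmod_two [Algebra (ZMod 2) A] (a : A) : -a = a := by
  rw [← neg_one_smul (ZMod 2) a, ZMod.neg_eq_self_mod_two, one_smul]

theorem Fintype.sum_subtype_of_eq_zero {ι M : Type*} [Fintype ι] [AddCommMonoid M]
    {p : ι → Prop} [DecidablePred p] (f : ι → M) (hf : ∀ i, ¬p i → f i = 0) :
    ∑ i : Subtype p, f i = ∑ i, f i := by
  rw [← Fintype.sum_subtype_add_sum_subtype p f, Fintype.sum_eq_zero (fun i : {i // ¬p i} => f i)
    fun i => hf i i.2, add_zero]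

variable {G : Type*}

def cancelCoeff (c : G → G → A) (x y : G) (v : A) (a b : G) : A :=
  c a b - c a y * v * c x b

theorem cancelCoeff_left_eq_zero (c : G → G → A) (x y : G) (u : Aˣ) (hu : (u : A) = c x y)
    (b : G) : cancelCoeff c x y ↑u⁻¹ x b = 0 := by
  simp [cancelCoeff, ← hu]

theorem cancelCoeff_right_eq_zero (c : G → G → A) (x y : G) (u : Aˣ) (hu : (u : A) = c x y)
    (a : G) : cancelCoeff c x y ↑u⁻¹ a y = 0 := by
  simp [cancelCoeff, ← hu, mul_assoc]

variable [Fintype G]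

def IsTypeDStructure (d : A →+ A) (c : G → G → A) : Prop :=
  ∀ a b : G, d (c a b) + ∑ e : G, c a e * c e b = 0

theorem IsTypeDStructure.sum_mul_eq_neg {d : A →+ A} {c : G → G → A} (hc : IsTypeDStructure d c)
    (a b : G) : ∑ e : G, c a e * c e b = -d (c a b) :=
  eq_neg_of_add_eq_zero_right (hc a b)

theorem IsTypeDStructure.cancel [DecidableEq G] {d : A →+ A} {c : G → G → A}
    (hleib : ∀ a b : A, d (a * b) = d a * b + a * d b) (hc : IsTypeDStructure d c)
    (x y : G) (u : Aˣ) (hu : (u : A) = c x y) (hdu : d (c x y) = 0) :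
    IsTypeDStructure d fun a b : {g : G // g ≠ x ∧ g ≠ y} => cancelCoeff c x y ↑u⁻¹ a b := by
  intro a b
  set v : A := ↑u⁻¹
  have hdv : d v = 0 := map_units_inv_eq_zero_of_leibniz d hleib u (hu ▸ hdu)
  have hsum : ∑ e : {g : G // g ≠ x ∧ g ≠ y}, cancelCoeff c x y v a e * cancelCoeff c x y v e b
      = ∑ e : G, cancelCoeff c x y v a e * cancelCoeff c x y v e b := by
    refine Fintype.sum_subtype_of_eq_zero
      (fun e => cancelCoeff c x y v a e * cancelCoeff c x y v e b) fun e he => ?_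
    obtain rfl | rfl : e = x ∨ e = y := by tauto
    · rw [cancelCoeff_left_eq_zero c e y u hu, mul_zero]
    · rw [cancelCoeff_right_eq_zero c x e u hu, zero_mul]
  have hexpand : ∑ e : G, cancelCoeff c x y v a e * cancelCoeff c x y v e b
      = ∑ e, c a e * c e b - (∑ e, c a e * c e y) * (v * c x b)
        - c a y * v * ∑ e, c x e * c e b
        + c a y * v * ((∑ e, c x e * c e y) * (v * c x b)) := by
    simp only [sum_mul, mul_sum, ← sum_sub_distrib, ← sum_add_distrib]
    refine sum_congr rfl fun e _ => ?_
    simp only [cancelCoeff]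
    noncomm_ring
  have hd : d (cancelCoeff c x y v a b)
      = d (c a b) - d (c a y) * v * c x b - c a y * v * d (c x b) := by
    simp only [cancelCoeff, map_sub, hleib, hdv]
    noncomm_ring
  rw [hsum, hexpand, hd]
  simp only [hc.sum_mul_eq_neg, hdu, neg_zero, zero_mul, mul_zero, add_zero]
  noncomm_ring

end

theorem typeD_cancellation_structure_eq_general
    {A : Type*} [Ring A] [Algebra (ZMod 2) A]
    (d : A →+ A)
    (hleib : ∀ a b : A, d (a * b) = d a * b + a * d b)
    {G : Type*} [Fintype G] [DecidableEq G]
    (c : G → G → A)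
    (hstr : ∀ a b : G, d (c a b) + ∑ e : G, c a e * c e b = 0)
    (x y : G)
    (u : Aˣ) (hu : (u : A) = c x y) (hdu : d (c x y) = 0) :
    ∀ a b : {g : G // g ≠ x ∧ g ≠ y},
      d (c ↑a ↑b + c ↑a y * ((u⁻¹ : Aˣ) : A) * c x ↑b)
        + ∑ e : {g : G // g ≠ x ∧ g ≠ y},
            (c ↑a ↑e + c ↑a y * ((u⁻¹ : Aˣ) : A) * c x ↑e)
              * (c ↑e ↑b + c ↑e y * ((u⁻¹ : Aˣ) : A) * c x ↑b) = 0 := by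
  intro a b
  simpa only [cancelCoeff, sub_eq_add_neg, neg_eq_self_of_zmod_two] using
    IsTypeDStructure.cancel hleib hstr x y u hu hdu a b

/-- Type-D cancellation over a unital dg-algebra `A` over `𝔽₂`: if the
coefficients `(c_{ab})` satisfy the type-D structure equation
`d(c_{ac}) + ∑_b c_{ab} c_{bc} = 0`, `x ≠ y`, `c_{xy}` is a unit with
`d(c_{xy}) = 0`, then the cancelled coefficients
`c'_{ac} = c_{ac} + c_{ay} c_{xy}⁻¹ c_{xc}` on `G \ {x,y}` also satisfy the
type-D structure equation. -/
theorem typeD_cancellation_structure_eq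
    {A : Type*} [Ring A] [Algebra (ZMod 2) A]
    (d : A →+ A)
    (hleib : ∀ a b : A, d (a * b) = d a * b + a * d b)
    (hd2 : ∀ a : A, d (d a) = 0)
    {G : Type*} [Fintype G] [DecidableEq G]
    (c : G → G → A)
    (hstr : ∀ a b : G, d (c a b) + ∑ e : G, c a e * c e b = 0)
    (x y : G) (hxy : x ≠ y)
    (u : Aˣ) (hu : (u : A) = c x y) (hdu : d (c x y) = 0) :
    ∀ a b : {g : G // g ≠ x ∧ g ≠ y},
      d (c ↑a ↑b + c ↑a y * ((u⁻¹ : Aˣ) : A) * c x ↑b)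
        + ∑ e : {g : G // g ≠ x ∧ g ≠ y},
            (c ↑a ↑e + c ↑a y * ((u⁻¹ : Aˣ) : A) * c x ↑e)
              * (c ↑e ↑b + c ↑e y * ((u⁻¹ : Aˣ) : A) * c x ↑b) = 0 :=
  typeD_cancellation_structure_eq_general d hleib c hstr x y u hu hdu
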